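/- arXiv:2103.17039 — 2 statements merged into one kernel-verified Lean document; each statement's English description precedes it below -/
import Mathlib

section
/- For every real n > 1, the sum ∑_{r=3}^{⌊log₂ n⌋} n^{-(r-2)/(2r)} tends to 0 as n → ∞. -/
/-!
Every exponent `-(r-2)/(2r)` with `r ≥ 3` is at most `-1/6`, and there are at most `log₂ n` terms,
so the sum is bounded by `log₂ n · n^(-1/6)`, which tends to `0` because logarithms grow slower
than any positive power.
-/

open Filter Finset Real

theorem tendsto_logb_mul_rpow_neg_atTop_zero (b : ℝ) {s : ℝ} (hs : 0 < s) :
    Tendsto (fun x : ℝ => logb b x * x ^ (-s)) atTop (nhds 0) := by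
  have h := ((isLittleO_log_rpow_atTop hs).tendsto_div_nhds_zero).div_const (log b)
  rw [zero_div] at h
  refine h.congr' ?_
  filter_upwards [eventually_gt_atTop 0] with x hx
  rw [rpow_neg hx.le, logb]
  ring

lemma rpow_neg_sub_two_div_le {x : ℝ} (hx : 1 ≤ x) {r : ℝ} (hr : 3 ≤ r) :
    x ^ (-((r - 2) / (2 * r))) ≤ x ^ (-(1 / 6) : ℝ) := by
  apply rpow_le_rpow_of_exponent_le hx
  have : (1 : ℝ) / 6 ≤ (r - 2) / (2 * r) := by
    rw [div_le_div_iff₀ (by norm_num) (by linarith)]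
    linarith
  linarith

lemma sum_Icc_three_rpow_le {x : ℝ} (hx : 1 ≤ x) :
    ∑ r ∈ Icc 3 ⌊logb 2 x⌋₊, x ^ (-(((r : ℝ) - 2) / (2 * (r : ℝ))))
      ≤ logb 2 x * x ^ (-(1 / 6) : ℝ) := by
  have hcard : ((Icc 3 ⌊logb 2 x⌋₊).card : ℝ) ≤ logb 2 x := by
    refine le_trans ?_ (Nat.floor_le (logb_nonneg one_lt_two hx))
    rw [Nat.card_Icc]
    exact_mod_cast Nat.sub_le_of_le_add (by omega)
  calc ∑ r ∈ Icc 3 ⌊logb 2 x⌋₊, x ^ (-(((r : ℝ) - 2) / (2 * (r : ℝ))))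
      ≤ (Icc 3 ⌊logb 2 x⌋₊).card • x ^ (-(1 / 6) : ℝ) :=
        sum_le_card_nsmul _ _ _ fun r hr =>
          rpow_neg_sub_two_div_le hx (by exact_mod_cast (mem_Icc.mp hr).1)
    _ ≤ logb 2 x * x ^ (-(1 / 6) : ℝ) := by
        rw [nsmul_eq_mul]
        exact mul_le_mul_of_nonneg_right hcard (rpow_nonneg (by linarith) _)

/-- The sum `∑_{r=3}^{⌊log₂ n⌋} n^{-(r-2)/(2r)}` tends to `0` as `n → ∞`. -/
theorem stmt_0 :
    Tendsto (fun n : ℝ =>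
      ∑ r ∈ Finset.Icc 3 ⌊Real.logb 2 n⌋₊,
        n ^ (-(((r : ℝ) - 2) / (2 * (r : ℝ))))) atTop (nhds 0) := by
  refine squeeze_zero' ?_ ?_
    (tendsto_logb_mul_rpow_neg_atTop_zero 2 (by norm_num : (0 : ℝ) < 1 / 6))
  · filter_upwards [eventually_ge_atTop 0] with x hx
    exact sum_nonneg fun r _ => rpow_nonneg hx _
  · filter_upwards [eventually_ge_atTop 1] with x hx
    exact sum_Icc_three_rpow_le hx
end

section
/- For every z ≥ 1, √(2π)·z^{z+1/2}·e^{−z}·e^{1/(12z+1)} ≤ Γ(z+1) ≤ √(2π)·z^{z+1/2}·e^{−z}·e^{1/(12z)}. -/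
open Real Filter Topology

/-!
Write `μ x = log Γ(x + 1) - ((x + 1/2) log x - x + log (2π) / 2)`. Then
`μ x - μ (x + 1) = (x + 1/2) log (1 + 1/x) - 1 = ∑_{k ≥ 1} t^(2k) / (2k + 1)` with `t = 1/(2x + 1)`,
and comparing with the geometric series `∑ t^(2k) / 3` and `∑ (t^2 / 3)^k` squeezes this increment
between the increments of `1/(12x + 1)` and of `1/(12x)`. Stirling's formula for `n!` together
with Gauss's limit `Γ(x + n + 1) / (n! n^x) → 1` gives `μ (x + n) → 0`, so telescoping yields
`1/(12x + 1) ≤ μ x ≤ 1/(12x)`.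
-/

noncomputable def stirlingRemainder (x : ℝ) : ℝ :=
  log (Gamma (x + 1)) - ((x + 1 / 2) * log x - x + log (2 * π) / 2)

lemma stirlingRemainder_sub_stirlingRemainder_add_one {x : ℝ} (hx : 0 < x) :
    stirlingRemainder x - stirlingRemainder (x + 1) = (x + 1 / 2) * log (1 + x⁻¹) - 1 := by
  have hx1 : 0 < x + 1 := by linarith
  have hΓ : 0 < Gamma (x + 1) := Gamma_pos_of_pos hx1
  have h1 : 1 + x⁻¹ = (x + 1) / x := by field_simp
  rw [stirlingRemainder, stirlingRemainder, Gamma_add_one hx1.ne', log_mul hx1.ne' hΓ.ne', h1,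
    log_div hx1.ne' hx.ne']
  ring

lemma hasSum_add_half_mul_log_one_add_inv_sub_one {x : ℝ} (hx : 0 < x) :
    HasSum (fun k : ℕ => (1 / (2 * x + 1)) ^ (2 * (k + 1)) / (2 * (k + 1) + 1))
      ((x + 1 / 2) * log (1 + x⁻¹) - 1) := by
  let f (k : ℕ) : ℝ := (1 / (2 * x + 1)) ^ (2 * k) / (2 * k + 1)
  have h := (hasSum_log_one_add_inv hx).mul_left (x + 1 / 2)
  have hf : HasSum f ((x + 1 / 2) * log (1 + x⁻¹)) := by
    refine (funext fun k => ?_ : _ = f) ▸ h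
    have : 2 * x + 1 ≠ 0 := by linarith
    simp only [f, pow_succ]
    field_simp
  simpa [f] using (hasSum_nat_add_iff' 1).2 hf

lemma hasSum_pow_succ_geometric {r : ℝ} (h0 : 0 ≤ r) (h1 : r < 1) :
    HasSum (fun k : ℕ => r ^ (k + 1)) (r / (1 - r)) := by
  simpa [pow_succ', div_eq_mul_inv] using (hasSum_geometric_of_lt_one h0 h1).mul_left r

lemma add_half_mul_log_one_add_inv_sub_one_le {x : ℝ} (hx : 0 < x) :
    (x + 1 / 2) * log (1 + x⁻¹) - 1 ≤ 1 / (12 * x) - 1 / (12 * (x + 1)) := by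
  set t := 1 / (2 * x + 1) with ht
  have ht0 : 0 < t := by positivity
  have ht1 : t ^ 2 < 1 := by
    rw [ht, div_pow, one_pow, div_lt_one (by positivity)]; nlinarith
  have hgeo := (hasSum_pow_succ_geometric (sq_nonneg t) ht1).div_const 3
  have hle := hasSum_le (fun k => ?_) (hasSum_add_half_mul_log_one_add_inv_sub_one hx) hgeo
  · refine hle.trans_eq ?_
    have h1 : 1 - t ^ 2 = 4 * x * (x + 1) / (2 * x + 1) ^ 2 := by
      rw [ht]; field_simp; ring
    rw [h1, ht]
    field_simp
    ring
  · rw [← pow_mul]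
    gcongr
    linarith [(Nat.cast_nonneg k : (0 : ℝ) ≤ k)]

lemma le_add_half_mul_log_one_add_inv_sub_one {x : ℝ} (hx : 1 / 2 ≤ x) :
    1 / (12 * x + 1) - 1 / (12 * (x + 1) + 1) ≤ (x + 1 / 2) * log (1 + x⁻¹) - 1 := by
  set t := 1 / (2 * x + 1) with ht
  have ht0 : 0 < t := by positivity
  have ht1 : t ^ 2 / 3 < 1 := by
    rw [ht, div_pow, one_pow, div_div, div_lt_one (by positivity)]; nlinarith
  have hgeo := hasSum_pow_succ_geometric (by positivity) ht1
  have hle := hasSum_le (fun k => ?_) hgeo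
    (hasSum_add_half_mul_log_one_add_inv_sub_one (x := x) (by linarith))
  · refine le_trans ?_ hle
    have h1 : 1 - t ^ 2 / 3 = (12 * x ^ 2 + 12 * x + 2) / (3 * (2 * x + 1) ^ 2) := by
      rw [ht]; field_simp; ring
    have h2 : t ^ 2 / 3 / (1 - t ^ 2 / 3) = 1 / (12 * x ^ 2 + 12 * x + 2) := by
      rw [h1, ht]; field_simp
    rw [h2, div_sub_div _ _ (by positivity) (by positivity),
      div_le_div_iff₀ (by positivity) (by positivity)]
    nlinarith
  · have h3 : (2 * (k + 1) + 1 : ℝ) ≤ 3 ^ (k + 1) := by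
      have := one_add_mul_le_pow (by norm_num : (-2 : ℝ) ≤ 2) (k + 1)
      norm_num at this
      linarith
    rw [← ht, div_pow, pow_mul]
    gcongr

lemma le_of_tendsto_of_sub_add_one_le {u v : ℕ → ℝ} {a : ℝ} (hu : Tendsto u atTop (𝓝 a))
    (hv : Tendsto v atTop (𝓝 a)) (h : ∀ n, u n - u (n + 1) ≤ v n - v (n + 1)) : u 0 ≤ v 0 := by
  have hanti : Antitone (v - u) :=
    antitone_nat_of_succ_le fun n => by simp only [Pi.sub_apply]; linarith [h n]
  exact sub_nonneg.1 (hanti.le_of_tendsto (sub_self a ▸ hv.sub hu) 0)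

lemma stirlingRemainder_natCast {n : ℕ} (hn : n ≠ 0) :
    stirlingRemainder n = log (Stirling.stirlingSeq n) - log √π := by
  have hn0 : (0 : ℝ) < n := by positivity
  rw [stirlingRemainder, Stirling.log_stirlingSeq_formula, Gamma_nat_eq_factorial,
    log_sqrt pi_pos.le, log_div hn0.ne' (exp_ne_zero 1), log_mul two_ne_zero hn0.ne',
    log_mul two_ne_zero pi_pos.ne', log_exp]
  ring

lemma tendsto_stirlingRemainder_natCast :
    Tendsto (fun n : ℕ => stirlingRemainder n) atTop (𝓝 0) := by
  have h := ((continuousAt_log (sqrt_pos.2 pi_pos).ne').tendsto.comp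
    Stirling.tendsto_stirlingSeq_sqrt_pi).sub_const (log √π)
  rw [sub_self] at h
  refine h.congr' ?_
  filter_upwards [eventually_ne_atTop 0] with n hn
  exact (stirlingRemainder_natCast hn).symm

lemma tendsto_log_Gamma_add_natCast_add_one_sub {x : ℝ} (hx : 0 < x) :
    Tendsto (fun n : ℕ => log (Gamma (x + n + 1)) - log n.factorial - x * log n) atTop (𝓝 0) := by
  have hfeq : ∀ {y : ℝ}, 0 < y → (log ∘ Gamma) (y + 1) = (log ∘ Gamma) y + log y := fun hy => by
    simp only [Function.comp_apply, Gamma_add_one hy.ne',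
      log_mul hy.ne' (Gamma_pos_of_pos hy).ne', add_comm]
  have h := (tendsto_const_nhds (x := log (Gamma x))).sub (BohrMollerup.tendsto_log_gamma hx)
  rw [sub_self] at h
  refine h.congr fun n => ?_
  have hs := BohrMollerup.f_add_nat_eq hfeq hx (n + 1)
  simp only [Function.comp_apply, Nat.cast_add, Nat.cast_one, ← add_assoc] at hs
  rw [BohrMollerup.logGammaSeq, hs]
  ring

lemma tendsto_add_mul_log_one_add_div (x c : ℝ) :
    Tendsto (fun y : ℝ => (y + c) * log (1 + x / y)) atTop (𝓝 x) := by
  have hlog : Tendsto (fun y : ℝ => log (1 + x / y)) atTop (𝓝 0) := by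
    have h1 : Tendsto (fun y : ℝ => 1 + x / y) atTop (𝓝 1) := by
      simpa using tendsto_const_nhds.add ((tendsto_const_nhds (x := x)).div_atTop tendsto_id)
    simpa using h1.log one_ne_zero
  simpa [add_mul] using (tendsto_mul_log_one_add_div_atTop x).add (hlog.const_mul c)

lemma tendsto_stirlingRemainder_add_natCast {x : ℝ} (hx : 0 < x) :
    Tendsto (fun n : ℕ => stirlingRemainder (x + n)) atTop (𝓝 0) := by
  have hB := ((tendsto_add_mul_log_one_add_div x (x + 1 / 2)).comp
    tendsto_natCast_atTop_atTop).sub_const x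
  have h := (tendsto_stirlingRemainder_natCast.add
    (tendsto_log_Gamma_add_natCast_add_one_sub hx)).sub hB
  rw [sub_self, add_zero, sub_zero] at h
  refine h.congr' ?_
  filter_upwards [eventually_ne_atTop 0] with n hn
  have hn0 : (0 : ℝ) < n := by positivity
  have hlog : log (1 + x / n) = log (x + n) - log n := by
    rw [← log_div (by positivity) hn0.ne']
    congr 1
    field_simp
    ring
  simp only [Function.comp_apply, stirlingRemainder, Gamma_nat_eq_factorial, hlog]
  ring

lemma tendsto_one_div_mul_add_natCast_add {x : ℝ} (a b : ℝ) (ha : 0 < a) :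
    Tendsto (fun n : ℕ => 1 / (a * (x + n) + b)) atTop (𝓝 0) :=
  tendsto_const_nhds.div_atTop <| tendsto_atTop_add_const_right _ b <|
    (tendsto_atTop_add_const_left _ x tendsto_natCast_atTop_atTop).const_mul_atTop ha

lemma stirlingRemainder_le {x : ℝ} (hx : 0 < x) : stirlingRemainder x ≤ 1 / (12 * x) := by
  have h := le_of_tendsto_of_sub_add_one_le (u := fun n : ℕ => stirlingRemainder (x + n))
    (v := fun n : ℕ => 1 / (12 * (x + n))) (tendsto_stirlingRemainder_add_natCast hx)
    (by simpa using tendsto_one_div_mul_add_natCast_add (x := x) 12 0 (by norm_num)) fun n => ?_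
  · simpa using h
  · have hxn : 0 < x + n := by positivity
    simp only [Nat.cast_add_one, ← add_assoc]
    rw [stirlingRemainder_sub_stirlingRemainder_add_one hxn]
    exact add_half_mul_log_one_add_inv_sub_one_le hxn

lemma one_div_le_stirlingRemainder {x : ℝ} (hx : 1 / 2 ≤ x) :
    1 / (12 * x + 1) ≤ stirlingRemainder x := by
  have h := le_of_tendsto_of_sub_add_one_le (u := fun n : ℕ => 1 / (12 * (x + n) + 1))
    (v := fun n : ℕ => stirlingRemainder (x + n))
    (tendsto_one_div_mul_add_natCast_add 12 1 (by norm_num))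
    (tendsto_stirlingRemainder_add_natCast (by linarith)) fun n => ?_
  · simpa using h
  · have hxn : 1 / 2 ≤ x + n := by have := n.cast_nonneg (α := ℝ); linarith
    simp only [Nat.cast_add_one, ← add_assoc]
    rw [stirlingRemainder_sub_stirlingRemainder_add_one (by linarith)]
    exact le_add_half_mul_log_one_add_inv_sub_one hxn

lemma Gamma_add_one_eq_mul_exp_stirlingRemainder {x : ℝ} (hx : 0 < x) :
    Gamma (x + 1) = √(2 * π) * x ^ (x + 1 / 2) * exp (-x) * exp (stirlingRemainder x) := by
  have h2π : 0 < 2 * π := by positivity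
  rw [rpow_def_of_pos hx, ← exp_log (sqrt_pos.2 h2π), log_sqrt h2π.le, ← exp_add, ← exp_add,
    ← exp_add, stirlingRemainder]
  conv_lhs => rw [← exp_log (Gamma_pos_of_pos (by linarith : 0 < x + 1))]
  congr 1
  ring

/-- Robbins's form of Stirling's bounds, for real `z ≥ 1`:
`√(2π) z^{z+1/2} e^{−z} e^{1/(12z+1)} ≤ Γ(z+1) ≤ √(2π) z^{z+1/2} e^{−z} e^{1/(12z)}`. -/
theorem stmt_15 (z : ℝ) (hz : 1 ≤ z) :
    Real.sqrt (2 * Real.pi) * z ^ (z + 1/2) * Real.exp (-z) * Real.exp (1 / (12 * z + 1))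
        ≤ Real.Gamma (z + 1) ∧
    Real.Gamma (z + 1) ≤
      Real.sqrt (2 * Real.pi) * z ^ (z + 1/2) * Real.exp (-z) * Real.exp (1 / (12 * z)) := by
  have hz0 : 0 < z := by linarith
  rw [Gamma_add_one_eq_mul_exp_stirlingRemainder hz0]
  constructor
  · gcongr
    exact one_div_le_stirlingRemainder (by linarith)
  · gcongr
    exact stirlingRemainder_le hz0
end
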